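/- arXiv:2603.27783 — 3 statements merged into one kernel-verified Lean document; each statement's English description precedes it below -/
import Mathlib

section
/- For every finite simple graph G, the critical difference equals the critical independence difference, i.e., max{|X| - |N(X)| : X ⊆ V(G)} = max{|I| - |N(I)| : I an independent set of G}. -/
open Finset

variable {V : Type*} [Fintype V] [DecidableEq V] (G : SimpleGraph V) [DecidableRel G.Adj]

/-- `N(S)`: the set of vertices adjacent to some vertex of `S`. -/
def nbhd (S : Finset V) : Finset V := S.biUnion (fun v => G.neighborFinset v)

/-- `S` is an independent set of `G`. -/
def Indep (S : Finset V) : Prop := ∀ u ∈ S, ∀ v ∈ S, ¬ G.Adj u v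

/-- The difference `d_G(S) = |S| - |N(S)|`. -/
def diffI (S : Finset V) : ℤ := (S.card : ℤ) - ((nbhd G S).card : ℤ)

/-- `S` is a maximum independent set of `G`. -/
def IsMaxIndep (S : Finset V) : Prop :=
  Indep G S ∧ ∀ T : Finset V, Indep G T → T.card ≤ S.card

/-- `I` is a critical independent set of `G`. -/
def IsCritIndep (I : Finset V) : Prop :=
  Indep G I ∧ ∀ J : Finset V, Indep G J → diffI G J ≤ diffI G I

/-- `I` is a maximum critical independent set of `G`. -/
def IsMaxCritIndep (I : Finset V) : Prop :=
  IsCritIndep G I ∧ ∀ J : Finset V, IsCritIndep G J → J.card ≤ I.card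

/-- `core(G)`: intersection of all maximum independent sets. -/
def core : Set V := {v | ∀ S : Finset V, IsMaxIndep G S → v ∈ S}

/-- `corona(G)`: union of all maximum independent sets. -/
def corona : Set V := {v | ∃ S : Finset V, IsMaxIndep G S ∧ v ∈ S}

/-- `nucleus(G)`: intersection of all maximum critical independent sets. -/
def nucleus : Set V := {v | ∀ S : Finset V, IsMaxCritIndep G S → v ∈ S}

/-- `diadem(G)`: union of all maximum critical independent sets. -/
def diadem : Set V := {v | ∃ S : Finset V, IsMaxCritIndep G S ∧ v ∈ S}

/-- `ker(G)`: intersection of all critical independent sets. -/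
def kerS : Set V := {v | ∀ S : Finset V, IsCritIndep G S → v ∈ S}

/-- A matching of `G`, given as an involution of the vertex set:
unmatched vertices are fixed points, matched vertices are sent to their partner. -/
def IsMatching (M : V → V) : Prop :=
  Function.Involutive M ∧ ∀ v, M v ≠ v → G.Adj v (M v)

/-- Twice the number of edges of the matching `M`, i.e. the number of matched vertices. -/
def matchSize (M : V → V) : ℕ := (univ.filter fun v => M v ≠ v).card

/-- `M` is a maximum matching of `G`. -/
def IsMaxMatching (M : V → V) : Prop :=
  IsMatching G M ∧ ∀ M' : V → V, IsMatching G M' → matchSize M' ≤ matchSize M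

/-- `M` is a matching of the induced subgraph `G[L]`. -/
def IsMatchingOn (L : Finset V) (M : V → V) : Prop :=
  IsMatching G M ∧ ∀ v, M v ≠ v → v ∈ L

/-- `M` is a maximum matching of the induced subgraph `G[L]`. -/
def IsMaxMatchingOn (L : Finset V) (M : V → V) : Prop :=
  IsMatchingOn G L M ∧ ∀ M' : V → V, IsMatchingOn G L M' → matchSize M' ≤ matchSize M

/-- `S` is a maximum independent set of the induced subgraph `G[L]`. -/
def IsMaxIndepOn (L : Finset V) (S : Finset V) : Prop :=
  S ⊆ L ∧ Indep G S ∧ ∀ T : Finset V, T ⊆ L → Indep G T → T.card ≤ S.card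

/-- `core` of the induced subgraph `G[L]`. -/
def coreOn (L : Finset V) : Set V := {v | ∀ S : Finset V, IsMaxIndepOn G L S → v ∈ S}

/-- `D(G[L])`: vertices of `L` missed by some maximum matching of `G[L]`. -/
def Dset (L : Finset V) : Set V := {v | v ∈ L ∧ ∃ M : V → V, IsMaxMatchingOn G L M ∧ M v = v}

/-- The Larson boundary `∂_L(G)` of the set `L`. -/
def boundaryL (L : Finset V) : Set V := {v | v ∈ L ∧ ∃ w, w ∉ L ∧ G.Adj v w}

/-- The critical difference `d(G)`. -/
noncomputable def critDiff : ℤ := sSup {d : ℤ | ∃ X : Finset V, diffI G X = d}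

/-- The difference of `S` computed in the induced subgraph `G[L]`. -/
def diffOn (L : Finset V) (S : Finset V) : ℤ := (S.card : ℤ) - ((nbhd G S ∩ L).card : ℤ)

/-- The critical difference of the induced subgraph `G[L]`. -/
noncomputable def critDiffOn (L : Finset V) : ℤ := sSup {d : ℤ | ∃ X : Finset V, X ⊆ L ∧ diffOn G L X = d}

/-- `G` is a König–Egerváry graph: `α(G) + μ(G) = |V(G)|`. -/
def KonigEgervary : Prop :=
  ∃ (S : Finset V) (M : V → V), IsMaxIndep G S ∧ IsMaxMatching G M ∧
    2 * S.card + matchSize M = 2 * Fintype.card V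
lemma mem_nbhd' {S : Finset V} {v : V} : v ∈ nbhd G S ↔ ∃ u ∈ S, G.Adj u v := by
  simp [nbhd, SimpleGraph.mem_neighborFinset]

lemma nbhd_mono {S T : Finset V} (h : S ⊆ T) : nbhd G S ⊆ nbhd G T := by
  intro v hv
  rcases (mem_nbhd' G).1 hv with ⟨u, hu, hadj⟩
  exact (mem_nbhd' G).2 ⟨u, h hu, hadj⟩

lemma exists_indep_ge (X : Finset V) :
    ∃ I : Finset V, Indep G I ∧ diffI G X ≤ diffI G I := by
  refine ⟨X \ nbhd G X, ?_, ?_⟩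
  · intro u hu v hv hadj
    rw [mem_sdiff] at hu hv
    exact hv.2 ((mem_nbhd' G).2 ⟨u, hu.1, hadj⟩)
  · have hsub : nbhd G (X \ nbhd G X) ⊆ nbhd G X \ X := by
      intro w hw
      rcases (mem_nbhd' G).1 hw with ⟨u, hu, hadj⟩
      rw [mem_sdiff] at hu
      rw [mem_sdiff]
      refine ⟨nbhd_mono G sdiff_subset hw, fun hwX => ?_⟩
      exact hu.2 ((mem_nbhd' G).2 ⟨w, hwX, hadj.symm⟩)
    have h1 : (X \ nbhd G X).card + (X ∩ nbhd G X).card = X.card :=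
      Finset.card_sdiff_add_card_inter X (nbhd G X)
    have h2 : (nbhd G X \ X).card + (nbhd G X ∩ X).card = (nbhd G X).card :=
      Finset.card_sdiff_add_card_inter (nbhd G X) X
    have h3 : (nbhd G X ∩ X).card = (X ∩ nbhd G X).card := by rw [inter_comm]
    have h4 : (nbhd G (X \ nbhd G X)).card ≤ (nbhd G X \ X).card :=
      Finset.card_le_card hsub
    unfold diffI
    omega

lemma diffI_le_card (X : Finset V) : diffI G X ≤ (Fintype.card V : ℤ) := by
  unfold diffI
  have h1 : X.card ≤ Fintype.card V := Finset.card_le_univ X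
  have h2 : (0 : ℤ) ≤ (nbhd G X).card := Int.natCast_nonneg _
  omega

theorem stmt1 :
    critDiff G = sSup {d : ℤ | ∃ I : Finset V, Indep G I ∧ diffI G I = d} := by
  have hbdd1 : BddAbove {d : ℤ | ∃ X : Finset V, diffI G X = d} := by
    refine ⟨(Fintype.card V : ℤ), fun d hd => ?_⟩
    rcases hd with ⟨X, rfl⟩
    exact diffI_le_card G X
  have hbdd2 : BddAbove {d : ℤ | ∃ I : Finset V, Indep G I ∧ diffI G I = d} := by
    refine ⟨(Fintype.card V : ℤ), fun d hd => ?_⟩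
    rcases hd with ⟨X, _, rfl⟩
    exact diffI_le_card G X
  have hne1 : {d : ℤ | ∃ X : Finset V, diffI G X = d}.Nonempty := ⟨_, ∅, rfl⟩
  have hne2 : {d : ℤ | ∃ I : Finset V, Indep G I ∧ diffI G I = d}.Nonempty :=
    ⟨_, ∅, fun u hu => by simp at hu, rfl⟩
  unfold critDiff
  apply le_antisymm
  · apply csSup_le hne1
    rintro d ⟨X, rfl⟩
    rcases exists_indep_ge G X with ⟨I, hI, hle⟩
    exact hle.trans (le_csSup hbdd2 ⟨I, hI, rfl⟩)
  · apply csSup_le_csSup hbdd1 hne2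
    rintro d ⟨I, _, rfl⟩
    exact ⟨I, rfl⟩
end

section
/- If I is a critical independent set of a graph G, then there exists a maximum matching of G that matches every vertex of N(I) to a vertex of I. -/
open Finset

variable {V : Type*} [Fintype V] [DecidableEq V] (G : SimpleGraph V) [DecidableRel G.Adj]

lemma indep_disjoint_nbhd {I : Finset V} (hI : Indep G I) {v : V} (hv : v ∈ I) :
    v ∉ nbhd G I := by
  intro h
  obtain ⟨u, hu, hadj⟩ := (mem_nbhd' G).1 h
  exact hI u hu v hv hadj

lemma hall_crit {I : Finset V} (hI : IsCritIndep G I) :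
    ∃ f : {x // x ∈ nbhd G I} → V, Function.Injective f ∧
      ∀ x : {x // x ∈ nbhd G I}, f x ∈ G.neighborFinset ↑x ∩ I := by
  apply (Finset.all_card_le_biUnion_card_iff_exists_injective
    (fun x : {x // x ∈ nbhd G I} => G.neighborFinset ↑x ∩ I)).1
  intro s
  classical
  set A := s.image Subtype.val with hA
  set B := s.biUnion (fun x : {x // x ∈ nbhd G I} => G.neighborFinset ↑x ∩ I) with hB
  have hBI : B ⊆ I := by
    intro b hb
    rw [hB, Finset.mem_biUnion] at hb
    obtain ⟨x, _, hx⟩ := hb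
    exact (Finset.mem_inter.1 hx).2
  have hcardA : A.card = s.card := Finset.card_image_of_injective _ Subtype.val_injective
  have hAN : A ⊆ nbhd G I := by
    intro a ha
    obtain ⟨x, _, rfl⟩ := Finset.mem_image.1 ha
    exact x.2
  have hJindep : Indep G (I \ B) := fun u hu v hv =>
    hI.1 u (Finset.mem_sdiff.1 hu).1 v (Finset.mem_sdiff.1 hv).1
  have hcrit := hI.2 _ hJindep
  have hNJ : nbhd G (I \ B) ⊆ nbhd G I \ A := by
    intro w hw
    rw [Finset.mem_sdiff]
    refine ⟨nbhd_mono G Finset.sdiff_subset hw, ?_⟩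
    intro hwA
    obtain ⟨j, hj, hadj⟩ := (mem_nbhd' G).1 hw
    obtain ⟨x, hx, rfl⟩ := Finset.mem_image.1 hwA
    have hjB : j ∈ B := by
      rw [hB, Finset.mem_biUnion]
      exact ⟨x, hx, Finset.mem_inter.2 ⟨(SimpleGraph.mem_neighborFinset G _ _).2 hadj.symm,
        (Finset.mem_sdiff.1 hj).1⟩⟩
    exact (Finset.mem_sdiff.1 hj).2 hjB
  have h1 : (I \ B).card = I.card - B.card := Finset.card_sdiff_of_subset hBI
  have h2 : (nbhd G (I \ B)).card ≤ (nbhd G I).card - A.card := by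
    calc (nbhd G (I \ B)).card ≤ (nbhd G I \ A).card := Finset.card_le_card hNJ
      _ = (nbhd G I).card - A.card := Finset.card_sdiff_of_subset hAN
  have hBle : B.card ≤ I.card := Finset.card_le_card hBI
  have hAle : A.card ≤ (nbhd G I).card := Finset.card_le_card hAN
  rw [diffI, diffI, h1] at hcrit
  rw [← hcardA]
  omega

theorem stmt2 (I : Finset V) (hI : IsCritIndep G I) :
    ∃ M : V → V, IsMaxMatching G M ∧ ∀ v ∈ nbhd G I, M v ≠ v ∧ M v ∈ I := by
  classical
  obtain ⟨f, hfinj, hf⟩ := hall_crit G hI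
  have hfI : ∀ x, f x ∈ I := fun x => (Finset.mem_inter.1 (hf x)).2
  have hfadj : ∀ x : {x // x ∈ (nbhd G I)}, G.Adj (↑x) (f x) := fun x =>
    (SimpleGraph.mem_neighborFinset G _ _).1 (Finset.mem_inter.1 (hf x)).1
  have hIN : ∀ v ∈ I, v ∉ (nbhd G I) := fun v hv => indep_disjoint_nbhd G hI.1 hv
  have hfnotN : ∀ x, f x ∉ (nbhd G I) := fun x => hIN _ (hfI x)
  set L : Finset V := Finset.univ \ (I ∪ (nbhd G I)) with hL
  have hmemL : ∀ v, v ∈ L ↔ (v ∉ I ∧ v ∉ (nbhd G I)) := by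
    intro v
    simp [hL]
  obtain ⟨M1, hM1, hM1max⟩ : ∃ M1, IsMatchingOn G L M1 ∧
      ∀ M', IsMatchingOn G L M' → matchSize M' ≤ matchSize M1 := by
    obtain ⟨M1, hmem, hmax⟩ := Finset.exists_max_image
      (Finset.univ.filter (fun M => IsMatchingOn G L M)) matchSize
      ⟨id, Finset.mem_filter.2 ⟨Finset.mem_univ _,
        ⟨⟨fun _ => rfl, fun v h => absurd rfl h⟩, fun v h => absurd rfl h⟩⟩⟩
    exact ⟨M1, (Finset.mem_filter.1 hmem).2,
      fun M' h => hmax M' (Finset.mem_filter.2 ⟨Finset.mem_univ _, h⟩)⟩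
  have hM1L : ∀ v, M1 v ≠ v → v ∈ L := hM1.2
  have hM1L' : ∀ v, M1 v ≠ v → M1 v ∈ L := by
    intro v h
    apply hM1.2
    rw [hM1.1.1 v]
    exact fun e => h e.symm
  set M : V → V := fun v =>
    if h : v ∈ (nbhd G I) then f ⟨v, h⟩
    else if h2 : ∃ x : {x // x ∈ (nbhd G I)}, f x = v then ↑h2.choose
    else M1 v with hM
  have hMn : ∀ (v : V) (h : v ∈ (nbhd G I)), M v = f ⟨v, h⟩ := fun v h => dif_pos h
  have hMf : ∀ x, M (f x) = ↑x := by
    intro x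
    have h2 : ∃ y : {y // y ∈ (nbhd G I)}, f y = f x := ⟨x, rfl⟩
    have he : M (f x) = ↑h2.choose := by
      rw [hM]
      simp only
      rw [dif_neg (hfnotN x), dif_pos h2]
    rw [he]
    exact congrArg Subtype.val (hfinj h2.choose_spec)
  have hMelse : ∀ v, v ∉ (nbhd G I) → (∀ x, f x ≠ v) → M v = M1 v := by
    intro v h h2
    rw [hM]
    simp only
    rw [dif_neg h, dif_neg (not_exists.2 h2)]
  have hML : ∀ v, v ∈ L → M v = M1 v := by
    intro v hv
    obtain ⟨hvI, hvN⟩ := (hmemL v).1 hv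
    exact hMelse v hvN (fun x hx => hvI (hx ▸ hfI x))
  have hinv : Function.Involutive M := by
    intro v
    by_cases h : v ∈ (nbhd G I)
    · rw [hMn v h]
      exact hMf ⟨v, h⟩
    · by_cases h2 : ∃ x : {x // x ∈ (nbhd G I)}, f x = v
      · obtain ⟨x, rfl⟩ := h2
        rw [hMf x, hMn _ x.2]
      · have h2' : ∀ x, f x ≠ v := not_exists.1 h2
        rw [hMelse v h h2']
        by_cases h3 : M1 v = v
        · rw [h3, hMelse v h h2', h3]
        · have hl : M1 v ∈ L := hM1L' v h3
          rw [hML _ hl, hM1.1.1 v]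
  have hadjM : ∀ v, M v ≠ v → G.Adj v (M v) := by
    intro v hne
    by_cases h : v ∈ (nbhd G I)
    · rw [hMn v h]
      exact hfadj ⟨v, h⟩
    · by_cases h2 : ∃ x : {x // x ∈ (nbhd G I)}, f x = v
      · obtain ⟨x, rfl⟩ := h2
        rw [hMf x]
        exact (hfadj x).symm
      · rw [hMelse v h (not_exists.1 h2)] at hne ⊢
        exact hM1.1.2 v hne
  have hMne : ∀ (v : V) (h : v ∈ (nbhd G I)), M v ≠ v := by
    intro v h
    rw [hMn v h]
    intro he
    apply hfnotN ⟨v, h⟩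
    rw [he]
    exact h
  -- lower bound on matchSize M
  have himgcard : (Finset.univ.image f).card = (nbhd G I).card := by
    rw [Finset.card_image_of_injective _ hfinj, Finset.card_univ, Fintype.card_coe]
  have hsubN : (nbhd G I) ⊆ Finset.univ.filter (fun v => M v ≠ v) := fun v hv =>
    Finset.mem_filter.2 ⟨Finset.mem_univ _, hMne v hv⟩
  have hsubF : Finset.univ.image f ⊆ Finset.univ.filter (fun v => M v ≠ v) := by
    intro v hv
    obtain ⟨x, _, rfl⟩ := Finset.mem_image.1 hv
    refine Finset.mem_filter.2 ⟨Finset.mem_univ _, ?_⟩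
    rw [hMf x]
    intro he
    exact hfnotN x (he ▸ x.2)
  have hsubM1 : Finset.univ.filter (fun v => M1 v ≠ v) ⊆
      Finset.univ.filter (fun v => M v ≠ v) := by
    intro v hv
    have hne := (Finset.mem_filter.1 hv).2
    refine Finset.mem_filter.2 ⟨Finset.mem_univ _, ?_⟩
    rw [hML v (hM1L v hne)]
    exact hne
  have hdisj1 : Disjoint (nbhd G I) (Finset.univ.image f) := by
    rw [Finset.disjoint_left]
    intro v hv hv2
    obtain ⟨x, _, rfl⟩ := Finset.mem_image.1 hv2
    exact hfnotN x hv
  have hdisj2 : Disjoint ((nbhd G I) ∪ Finset.univ.image f)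
      (Finset.univ.filter (fun v => M1 v ≠ v)) := by
    rw [Finset.disjoint_left]
    intro v hv hv2
    have hvl : v ∈ L := hM1L v (Finset.mem_filter.1 hv2).2
    obtain ⟨hvI, hvN⟩ := (hmemL v).1 hvl
    rcases Finset.mem_union.1 hv with h | h
    · exact hvN h
    · obtain ⟨x, _, rfl⟩ := Finset.mem_image.1 h
      exact hvI (hfI x)
  have hsize : 2 * (nbhd G I).card + matchSize M1 ≤ matchSize M := by
    have hsub : ((nbhd G I) ∪ Finset.univ.image f) ∪ Finset.univ.filter (fun v => M1 v ≠ v) ⊆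
        Finset.univ.filter (fun v => M v ≠ v) := by
      intro v hv
      rcases Finset.mem_union.1 hv with h | h
      · rcases Finset.mem_union.1 h with h' | h'
        · exact hsubN h'
        · exact hsubF h'
      · exact hsubM1 h
    calc 2 * (nbhd G I).card + matchSize M1
        = (((nbhd G I) ∪ Finset.univ.image f) ∪ Finset.univ.filter (fun v => M1 v ≠ v)).card := by
          rw [Finset.card_union_of_disjoint hdisj2, Finset.card_union_of_disjoint hdisj1,
            himgcard, matchSize]
          ring
      _ ≤ matchSize M := Finset.card_le_card hsub
  -- upper bound for arbitrary matchings
  have hupper : ∀ M' : V → V, IsMatching G M' → matchSize M' ≤ 2 * (nbhd G I).card + matchSize M1 := by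
    intro M' hM'
    set S := Finset.univ.filter (fun v => M' v ≠ v) with hS
    set A := S.filter (fun v => v ∈ I ∪ (nbhd G I) ∨ M' v ∈ I ∪ (nbhd G I)) with hA
    set B := S.filter (fun v => ¬(v ∈ I ∪ (nbhd G I) ∨ M' v ∈ I ∪ (nbhd G I))) with hB
    have hsplit : A.card + B.card = S.card := Finset.card_filter_add_card_filter_not _
    have hBmem : ∀ v ∈ B, M' v ≠ v ∧ v ∉ I ∧ v ∉ (nbhd G I) ∧ M' v ∉ I ∧ M' v ∉ (nbhd G I) := by
      intro v hv
      rw [hB, Finset.mem_filter] at hv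
      obtain ⟨hvS, hv2⟩ := hv
      push_neg at hv2
      have h1 := (Finset.mem_filter.1 hvS).2
      simp only [Finset.mem_union] at hv2
      push_neg at hv2
      exact ⟨h1, hv2.1.1, hv2.1.2, hv2.2.1, hv2.2.2⟩
    have hBclosed : ∀ v ∈ B, M' v ∈ B := by
      intro v hv
      obtain ⟨h1, h2, h3, h4, h5⟩ := hBmem v hv
      rw [hB, Finset.mem_filter]
      refine ⟨Finset.mem_filter.2 ⟨Finset.mem_univ _, ?_⟩, ?_⟩
      · rw [hM'.1 v]
        exact fun e => h1 e.symm
      · rw [hM'.1 v]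
        simp only [Finset.mem_union]
        push_neg
        exact ⟨⟨h4, h5⟩, h2, h3⟩
    -- B bound via restricted matching
    have hBbound : B.card ≤ matchSize M1 := by
      set M'' : V → V := fun v => if v ∈ B then M' v else v with hM''
      have hM''B : ∀ v ∈ B, M'' v = M' v := fun v hv => if_pos hv
      have hM''nB : ∀ v, v ∉ B → M'' v = v := fun v hv => if_neg hv
      have hinv'' : Function.Involutive M'' := by
        intro v
        by_cases h : v ∈ B
        · rw [hM''B v h, hM''B _ (hBclosed v h), hM'.1 v]
        · rw [hM''nB v h, hM''nB v h]
      have hmatch'' : IsMatchingOn G L M'' := by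
        refine ⟨⟨hinv'', ?_⟩, ?_⟩
        · intro v hne
          by_cases h : v ∈ B
          · rw [hM''B v h] at hne ⊢
            exact hM'.2 v hne
          · rw [hM''nB v h] at hne
            exact absurd rfl hne
        · intro v hne
          by_cases h : v ∈ B
          · obtain ⟨_, h2, h3, _, _⟩ := hBmem v h
            exact (hmemL v).2 ⟨h2, h3⟩
          · rw [hM''nB v h] at hne
            exact absurd rfl hne
      have hBeq : B = Finset.univ.filter (fun v => M'' v ≠ v) := by
        ext v
        simp only [Finset.mem_filter, Finset.mem_univ, true_and]
        constructor
        · intro hv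
          rw [hM''B v hv]
          exact (hBmem v hv).1
        · intro hv
          by_contra h
          rw [hM''nB v h] at hv
          exact hv rfl
      calc B.card = matchSize M'' := by rw [hBeq]; rfl
        _ ≤ matchSize M1 := hM1max M'' hmatch''
    -- A bound
    have hAbound : A.card ≤ 2 * (nbhd G I).card := by
      set g : V → V := fun v => if v ∈ (nbhd G I) then v else M' v with hg
      have hgN : ∀ v ∈ A, g v ∈ (nbhd G I) := by
        intro v hv
        rw [hA, Finset.mem_filter] at hv
        obtain ⟨hvS, hv2⟩ := hv
        have hne := (Finset.mem_filter.1 hvS).2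
        have hadj : G.Adj v (M' v) := hM'.2 v hne
        by_cases h : v ∈ (nbhd G I)
        · rw [hg]; simp [h]
        · have hgv : g v = M' v := if_neg h
          rw [hgv]
          by_cases h2 : v ∈ I
          · exact (mem_nbhd' G).2 ⟨v, h2, hadj⟩
          · rcases hv2 with h3 | h3
            · rcases Finset.mem_union.1 h3 with h4 | h4
              · exact absurd h4 h2
              · exact absurd h4 h
            · rcases Finset.mem_union.1 h3 with h4 | h4
              · exact absurd ((mem_nbhd' G).2 ⟨M' v, h4, hadj.symm⟩) h
              · exact h4
      have hfiber : ∀ b ∈ A.image g, (A.filter (fun v => g v = b)).card ≤ 2 := by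
        intro b _
        have hsub2 : A.filter (fun v => g v = b) ⊆ {b, M' b} := by
          intro v hv
          obtain ⟨hvA, hgv⟩ := Finset.mem_filter.1 hv
          by_cases h : v ∈ (nbhd G I)
          · have : g v = v := if_pos h
            rw [this] at hgv
            simp [hgv]
          · have : g v = M' v := if_neg h
            rw [this] at hgv
            have : v = M' b := by rw [← hgv, hM'.1 v]
            simp [this]
        calc (A.filter (fun v => g v = b)).card ≤ ({b, M' b} : Finset V).card :=
              Finset.card_le_card hsub2
          _ ≤ 2 := Finset.card_insert_le _ _ |>.trans (by simp)
      calc A.card ≤ 2 * (A.image g).card := Finset.card_le_mul_card_image A 2 hfiber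
        _ ≤ 2 * (nbhd G I).card := by
            apply Nat.mul_le_mul_left
            apply Finset.card_le_card
            intro b hb
            obtain ⟨v, hv, rfl⟩ := Finset.mem_image.1 hb
            exact hgN v hv
    calc matchSize M' = S.card := rfl
      _ = A.card + B.card := hsplit.symm
      _ ≤ 2 * (nbhd G I).card + matchSize M1 := Nat.add_le_add hAbound hBbound
  refine ⟨M, ⟨⟨hinv, hadjM⟩, fun M' hM' => le_trans (hupper M' hM') hsize⟩, ?_⟩
  intro v hv
  rw [hMn v hv]
  refine ⟨fun he => hfnotN ⟨v, hv⟩ ?_, hfI ⟨v, hv⟩⟩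
  rw [he]
  exact hv
end

section
/- If G is a König–Egerváry graph, then the family of maximum critical independent sets of G equals the family of maximum independent sets of G; in particular, the nucleus of G (the intersection of all maximum critical independent sets) equals the core of G (the intersection of all maximum independent sets). -/
open Finset

variable {V : Type*} [Fintype V] [DecidableEq V] (G : SimpleGraph V) [DecidableRel G.Adj]

/-!
Take a maximum independent set `S₀` and a matching `M` with `2|S₀| + |V(M)| = 2|V|`.
For any set `J`, the partner map of `M` injects the matched vertices of `J` into
`N(J)`, so `|V(M)| ≤ |N(J)| + |V \ J|`, i.e. `d(J) ≤ |V| - |V(M)| = 2α - |V|`. A maximum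
independent set `S` dominates the graph, so `N(S) = V \ S` and `d(S) = 2α - |V|` attains this
bound: every maximum independent set is critical. A maximum critical independent set therefore has
at least `α` vertices, hence is a maximum independent set, and conversely.
-/

section

variable {G}

lemma mem_nbhd_of_adj {S : Finset V} {u v : V} (hu : u ∈ S) (h : G.Adj u v) :
    v ∈ nbhd G S :=
  mem_biUnion.2 ⟨u, hu, (G.mem_neighborFinset u v).2 h⟩

lemma Indep.insert {S : Finset V} {v : V} (hS : Indep G S) (hv : v ∉ nbhd G S) :
    Indep G (insert v S) := by
  intro a ha b hb hab
  rw [mem_insert] at ha hb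
  rcases ha with rfl | ha <;> rcases hb with rfl | hb
  · exact G.irrefl hab
  · exact hv (mem_nbhd_of_adj hb hab.symm)
  · exact hv (mem_nbhd_of_adj ha hab)
  · exact hS a ha b hb hab

lemma Indep.disjoint_nbhd {S : Finset V} (hS : Indep G S) : Disjoint S (nbhd G S) := by
  refine disjoint_left.2 fun v hv hvN => ?_
  obtain ⟨u, hu, hadj⟩ := mem_biUnion.1 hvN
  exact hS u hu v hv ((G.mem_neighborFinset u v).1 hadj)

lemma IsMaxIndep.nbhd_eq_compl {S : Finset V} (hS : IsMaxIndep G S) : nbhd G S = Sᶜ := by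
  ext v
  rw [mem_compl]
  refine ⟨fun hvN hvS => disjoint_left.1 hS.1.disjoint_nbhd hvS hvN, fun hvS => ?_⟩
  by_contra hvN
  have := hS.2 _ (hS.1.insert hvN)
  rw [card_insert_of_notMem hvS] at this
  omega

lemma IsMaxIndep.diffI_eq {S : Finset V} (hS : IsMaxIndep G S) :
    diffI G S = 2 * #S - Fintype.card V := by
  rw [diffI, hS.nbhd_eq_compl, card_compl, Nat.cast_sub (card_le_univ S)]
  ring

lemma diffI_le_card_sub_matchSize (J : Finset V) {M : V → V} (hM : IsMatching G M) :
    diffI G J ≤ Fintype.card V - matchSize M := by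
  set A := univ.filter fun v => M v ≠ v
  have hmatched : #(A ∩ J) ≤ #(nbhd G J) := by
    refine card_le_card_of_injOn M (fun v hv => ?_) hM.1.injective.injOn
    obtain ⟨hvA, hvJ⟩ := mem_inter.1 hv
    exact mem_nbhd_of_adj hvJ (hM.2 v (mem_filter.1 hvA).2)
  have hunmatched : #(A \ J) ≤ #Jᶜ := card_le_card fun v hv => mem_compl.2 (mem_sdiff.1 hv).2
  have hsplit := card_inter_add_card_sdiff A J
  have hcompl := card_compl J
  have hJV := card_le_univ J
  change (#J : ℤ) - #(nbhd G J) ≤ Fintype.card V - #A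
  omega

theorem KonigEgervary.isCritIndep_of_isMaxIndep (h : KonigEgervary G) {S : Finset V}
    (hS : IsMaxIndep G S) : IsCritIndep G S := by
  obtain ⟨S₀, M, hS₀, hM, hKE⟩ := h
  refine ⟨hS.1, fun J _ => ?_⟩
  have := diffI_le_card_sub_matchSize J hM.1
  rw [hS.diffI_eq, le_antisymm (hS₀.2 S hS.1) (hS.2 S₀ hS₀.1)]
  omega

lemma isMaxCritIndep_iff_isMaxIndep {S₀ : Finset V} (hS₀ : IsMaxIndep G S₀)
    (hcrit : ∀ S, IsMaxIndep G S → IsCritIndep G S) (S : Finset V) :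
    IsMaxCritIndep G S ↔ IsMaxIndep G S :=
  ⟨fun hS => ⟨hS.1.1, fun T hT => (hS₀.2 T hT).trans (hS.2 S₀ (hcrit S₀ hS₀))⟩,
    fun hS => ⟨hcrit S hS, fun J hJ => hS.2 J hJ.1⟩⟩

end

theorem stmt5 (h : KonigEgervary G) :
    (∀ S : Finset V, IsMaxCritIndep G S ↔ IsMaxIndep G S) ∧ nucleus G = core G := by
  obtain ⟨S₀, -, hS₀, -⟩ := id h
  have hiff := isMaxCritIndep_iff_isMaxIndep hS₀ fun _ => h.isCritIndep_of_isMaxIndep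
  exact ⟨hiff, Set.ext fun v => forall_congr' fun S => by rw [hiff]⟩
end
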